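/- arXiv:1102.2252 — 6 statements merged into one kernel-verified Lean document; each statement's English description precedes it below -/
import Mathlib

section
/- Let C be a C*-algebra and α : C → C a *-endomorphism. Define the radical R_α as the closure of the union of the kernels ker(α^n) for n ≥ 1. Then an element c ∈ C lies in R_α if and only if lim_n ‖α^n(c)‖ = 0. -/
/-!
A ⋆-homomorphism between C⋆-algebras is contractive, so if `c` is within `ε` of some `x` with
`αⁿ⁺¹ x = 0`, then `‖αᵐ c‖ < ε` for all `m > n`. Conversely, if `‖αⁿ⁺¹ c‖ ≤ r`, cut `c` off by
continuous functional calculus: `x = c - c g(c⋆c)` with `g(t) = r² / max t r²`. Since `g = 1` on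
`[0, r²]` and `αⁿ⁺¹` commutes with functional calculus, `αⁿ⁺¹ x = 0`, while
`‖c - x‖² = ‖g(c⋆c) c⋆c g(c⋆c)‖ ≤ sup_{t ≥ 0} t g(t)² = r²`.
-/

open Filter Topology

/-- The radical of a dynamical system `(C, α)`: the closure of the union of the
kernels of the powers `α^n`, `n ≥ 1`. -/
def starRadical {C : Type*} [NormedRing C] [StarRing C] [CStarRing C] [CompleteSpace C]
    [NormedAlgebra ℂ C] [StarModule ℂ C] (α : C →⋆ₐ[ℂ] C) : Set C :=
  closure (⋃ n : ℕ, {x : C | (⇑α)^[n + 1] x = 0})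

theorem StarAlgHom.coe_pow {R A : Type*} [CommSemiring R] [Semiring A] [Algebra R A] [Star A]
    (φ : A →⋆ₐ[R] A) (n : ℕ) : ⇑(φ ^ n) = (⇑φ)^[n] :=
  n.rec rfl fun _ ih ↦ by rw [pow_succ, Function.iterate_succ, ← ih]; rfl

lemma div_max_mul_mul_div_max_le_self {s t : ℝ} (hs : 0 ≤ s) (ht : 0 ≤ t) :
    s / max t s * t * (s / max t s) ≤ s := by
  rcases le_total t s with hts | hst
  · rw [max_eq_right hts]
    calc s / s * t * (s / s) ≤ 1 * t * 1 := by gcongr <;> exact div_self_le_one s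
      _ ≤ s := by linarith
  · rw [max_eq_left hst]
    rcases hs.eq_or_lt with rfl | hs
    · simp
    calc s / t * t * (s / t) = s * (s / t) := by field_simp
      _ ≤ s * 1 := by gcongr; exact div_le_one_of_le₀ hst (by linarith)
      _ = s := mul_one s

lemma continuous_sq_div_max_sq {r : ℝ} (hr : 0 < r) :
    Continuous fun t : ℝ ↦ r ^ 2 / max t (r ^ 2) :=
  continuous_const.div (continuous_id.max continuous_const) fun t ↦
    ((pow_pos hr 2).trans_le (le_max_right t _)).ne'

namespace CStarAlgebra

variable {A B : Type*} [CStarAlgebra A] [CStarAlgebra B]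

noncomputable def cutoff (r : ℝ) (c : A) : A :=
  c - c * cfc (fun t : ℝ ↦ r ^ 2 / max t (r ^ 2)) (star c * c)

variable {r : ℝ}

lemma cutoff_eq_zero_of_norm_le (hr : 0 < r) {c : A} (hc : ‖c‖ ≤ r) : cutoff r c = 0 := by
  nontriviality A
  suffices cfc (fun t : ℝ ↦ r ^ 2 / max t (r ^ 2)) (star c * c) = 1 by
    rw [cutoff, this, mul_one, sub_self]
  have hspec : ∀ t ∈ spectrum ℝ (star c * c), t ≤ r ^ 2 := fun t ht ↦
    calc t ≤ ‖t‖ := le_abs_self t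
      _ ≤ ‖star c * c‖ := spectrum.norm_le_norm_of_mem ht
      _ = ‖c‖ ^ 2 := by rw [CStarRing.norm_star_mul_self, sq]
      _ ≤ r ^ 2 := by gcongr
  rw [cfc_congr (g := fun _ ↦ 1) fun t ht ↦ ?_, cfc_const_one ℝ (star c * c)]
  simp only [max_eq_right (hspec t ht), div_self (pow_pos hr 2).ne']

lemma _root_.StarAlgHom.map_cutoff (hr : 0 < r) (φ : A →⋆ₐ[ℂ] B) (c : A) :
    φ (cutoff r c) = cutoff r (φ c) := by
  rw [cutoff, cutoff, map_sub, map_mul,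
    φ.map_cfc _ _ (continuous_sq_div_max_sq hr).continuousOn
      (hφa := (IsSelfAdjoint.star_mul_self c).map φ), map_mul, map_star]

lemma norm_sub_cutoff_le (hr : 0 < r) (c : A) : ‖c - cutoff r c‖ ≤ r := by
  set g : ℝ → ℝ := fun t ↦ r ^ 2 / max t (r ^ 2)
  have hg : Continuous g := continuous_sq_div_max_sq hr
  set y := cfc g (star c * c)
  have hy : IsSelfAdjoint y := cfc_predicate g _
  have hsq : star (c * y) * (c * y) = cfc (fun t ↦ g t * t * g t) (star c * c) := by
    rw [cfc_mul (fun t ↦ g t * t) g _ (hg.mul continuous_id).continuousOn hg.continuousOn,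
      cfc_mul g (fun t ↦ t) _ hg.continuousOn continuous_id.continuousOn, cfc_id' ℝ (star c * c),
      star_mul, hy.star_eq, mul_assoc, mul_assoc, mul_assoc]
  have hbound : ‖star (c * y) * (c * y)‖ ≤ r ^ 2 := by
    rw [hsq]
    refine norm_cfc_le (sq_nonneg r) fun t ht ↦ ?_
    have ht0 := spectrum_star_mul_self_nonneg t ht
    rw [Real.norm_of_nonneg (by positivity)]
    exact div_max_mul_mul_div_max_le_self (sq_nonneg r) ht0
  rw [CStarRing.norm_star_mul_self, ← sq] at hbound
  rw [cutoff, sub_sub_cancel]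
  exact (pow_le_pow_iff_left₀ (norm_nonneg _) hr.le two_ne_zero).mp hbound

end CStarAlgebra

section

variable {A : Type*} [CStarAlgebra A] {α : A →⋆ₐ[ℂ] A} {c : A}

lemma tendsto_norm_iterate_of_mem_starRadical (hc : c ∈ starRadical α) :
    Tendsto (fun n ↦ ‖(⇑α)^[n] c‖) atTop (𝓝 0) := by
  refine Metric.tendsto_atTop.mpr fun ε hε ↦ ?_
  obtain ⟨x, hx, hcx⟩ := Metric.mem_closure_iff.mp hc ε hε
  obtain ⟨k, hk⟩ := Set.mem_iUnion.mp hx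
  refine ⟨k + 1, fun n hn ↦ ?_⟩
  have hxn : (α ^ n) x = 0 := by
    obtain ⟨m, rfl⟩ := Nat.exists_eq_add_of_le' hn
    rw [StarAlgHom.coe_pow, Function.iterate_add_apply, hk, Function.iterate_fixed (map_zero α)]
  calc dist ‖(⇑α)^[n] c‖ 0 = ‖(α ^ n) (c - x)‖ := by
        rw [map_sub, hxn, sub_zero, StarAlgHom.coe_pow, Real.dist_0_eq_abs, abs_norm]
    _ ≤ ‖c - x‖ := NonUnitalStarAlgHom.norm_apply_le _ _
    _ < ε := by rwa [← dist_eq_norm]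

lemma mem_starRadical_of_tendsto (h : Tendsto (fun n ↦ ‖(⇑α)^[n] c‖) atTop (𝓝 0)) :
    c ∈ starRadical α := by
  refine Metric.mem_closure_iff.mpr fun ε hε ↦ ?_
  have hr : 0 < ε / 2 := half_pos hε
  obtain ⟨n, hn⟩ := ((h.comp (tendsto_add_atTop_nat 1)).eventually (ge_mem_nhds hr)).exists
  refine ⟨CStarAlgebra.cutoff (ε / 2) c, Set.mem_iUnion.mpr ⟨n, ?_⟩, ?_⟩
  · rw [Set.mem_ofPred_eq, ← StarAlgHom.coe_pow, StarAlgHom.map_cutoff hr]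
    exact CStarAlgebra.cutoff_eq_zero_of_norm_le hr (by rwa [StarAlgHom.coe_pow])
  · rw [dist_eq_norm]
    exact (CStarAlgebra.norm_sub_cutoff_le hr c).trans_lt (half_lt_self hε)

end

/-- An element `c` of a C*-algebra lies in the radical
`R_α = closure (⋃ₙ ker α^n)` if and only if `‖α^n(c)‖ → 0`. -/
theorem mem_starRadical_iff_tendsto_zero
    {C : Type*} [NormedRing C] [StarRing C] [CStarRing C] [CompleteSpace C]
    [NormedAlgebra ℂ C] [StarModule ℂ C] (α : C →⋆ₐ[ℂ] C) (c : C) :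
    c ∈ starRadical α ↔
      Tendsto (fun n : ℕ => ‖(⇑α)^[n] c‖) atTop (𝓝 0) := by
  let : CStarAlgebra C := { ‹NormedRing C›, ‹StarRing C›, ‹CompleteSpace C›, ‹CStarRing C›,
    ‹NormedAlgebra ℂ C›, ‹StarModule ℂ C› with }
  exact ⟨tendsto_norm_iterate_of_mem_starRadical, mem_starRadical_of_tendsto⟩
end

section
/- Let C be a C*-algebra and α : C → C a *-endomorphism with radical R_α = closure(⋃_n ker α^n). Then α(R_α) ⊆ R_α and α⁻¹(R_α) = R_α, so α induces an injective *-homomorphism α̇ : C/R_α → C/R_α given by α̇(c + R_α) = α(c) + R_α. -/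
open Filter Topology

section Aux

variable {C : Type*} [NormedRing C] [StarRing C] [CStarRing C] [CompleteSpace C]
    [NormedAlgebra ℂ C] [StarModule ℂ C] (α : C →⋆ₐ[ℂ] C)

noncomputable instance auxCStarAlgebra : CStarAlgebra C :=
  { ‹NormedRing C›, ‹StarRing C›, ‹CStarRing C›, ‹CompleteSpace C›,
    ‹NormedAlgebra ℂ C›, ‹StarModule ℂ C› with }

lemma aux_continuous : Continuous α :=
  AddMonoidHomClass.continuous_of_bound α 1
    (by simpa using fun x => NonUnitalStarAlgHom.norm_apply_le α x)

lemma aux_iter_sub (k : ℕ) (u v : C) : (⇑α)^[k] (u - v) = (⇑α)^[k] u - (⇑α)^[k] v := by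
  induction k with
  | zero => simp
  | succ k ih => simp [Function.iterate_succ_apply', ih, map_sub]

lemma aux_iter_norm (k : ℕ) (u : C) : ‖(⇑α)^[k] u‖ ≤ ‖u‖ := by
  induction k with
  | zero => simp
  | succ k ih =>
    rw [Function.iterate_succ_apply']
    exact (NonUnitalStarAlgHom.norm_apply_le α _).trans ih

lemma aux_iter_mul (k : ℕ) (u v : C) : (⇑α)^[k] (u * v) = (⇑α)^[k] u * (⇑α)^[k] v := by
  induction k with
  | zero => simp
  | succ k ih => simp [Function.iterate_succ_apply', ih, map_mul]

lemma aux_iter_star (k : ℕ) (u : C) : (⇑α)^[k] (star u) = star ((⇑α)^[k] u) := by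
  induction k with
  | zero => simp
  | succ k ih => simp [Function.iterate_succ_apply', ih, map_star]

lemma aux_iter_cfc (f : ℝ → ℝ) (hf : Continuous f) (a : C) (ha : IsSelfAdjoint a) (k : ℕ) :
    IsSelfAdjoint ((⇑α)^[k] a) ∧ (⇑α)^[k] (cfc f a) = cfc f ((⇑α)^[k] a) := by
  induction k with
  | zero => exact ⟨ha, rfl⟩
  | succ k ih =>
    obtain ⟨ihsa, iheq⟩ := ih
    refine ⟨?_, ?_⟩
    · rw [Function.iterate_succ_apply']; exact ihsa.map α
    · rw [Function.iterate_succ_apply', iheq,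
        StarAlgHom.map_cfc α f _ (hf.continuousOn) (aux_continuous α) ihsa (ihsa.map α),
        ← Function.iterate_succ_apply' (⇑α) k a]

end Aux

/-- `α(R_α) ⊆ R_α` and `α⁻¹(R_α) = R_α`; consequently `α` induces a well-defined
injective *-homomorphism `α̇ : C/R_α → C/R_α`, `c + R_α ↦ α(c) + R_α` (the first
conjunct is precisely well-definedness of `α̇`, the second precisely its injectivity). -/
theorem starRadical_invariant_and_preimage
    {C : Type*} [NormedRing C] [StarRing C] [CStarRing C] [CompleteSpace C]
    [NormedAlgebra ℂ C] [StarModule ℂ C] (α : C →⋆ₐ[ℂ] C) :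
    (∀ c ∈ starRadical α, α c ∈ starRadical α) ∧
      (⇑α) ⁻¹' (starRadical α) = starRadical α := by
  set S : Set C := ⋃ n : ℕ, {x : C | (⇑α)^[n + 1] x = 0} with hS
  have hcont : Continuous α := aux_continuous α
  have hmaps : ∀ x ∈ S, α x ∈ S := by
    intro x hx
    obtain ⟨n, hn⟩ := Set.mem_iUnion.mp hx
    refine Set.mem_iUnion.mpr ⟨n, ?_⟩
    show (⇑α)^[n + 1] (α x) = 0
    rw [← Function.iterate_succ_apply, Function.iterate_succ_apply', hn, map_zero]
  have part1 : ∀ c ∈ starRadical α, α c ∈ starRadical α := by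
    intro c hc
    have h1 : α c ∈ closure (α '' S) :=
      image_closure_subset_closure_image hcont ⟨c, hc, rfl⟩
    have h2 : α '' S ⊆ S := by rintro _ ⟨u, hu, rfl⟩; exact hmaps u hu
    exact closure_mono h2 h1
  refine ⟨part1, Set.Subset.antisymm ?_ (fun c hc => part1 c hc)⟩
  -- the hard direction: α x ∈ R_α → x ∈ R_α
  intro x hx
  rw [Set.mem_preimage, starRadical, Metric.mem_closure_iff] at hx
  show x ∈ closure S
  rcases subsingleton_or_nontrivial C with htriv | hnt
  · exact subset_closure (Set.mem_iUnion.mpr ⟨0, by simp [Subsingleton.elim x 0]⟩)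
  rw [Metric.mem_closure_iff]
  intro ε hε
  set δ : ℝ := ε ^ 2 / 2 with hδdef
  have hδ : 0 < δ := by positivity
  -- find n with ‖α^[n+1] (star x * x)‖ < δ / 2
  obtain ⟨y, hy, hdist⟩ := hx (Real.sqrt (δ / 2)) (Real.sqrt_pos.mpr (by positivity))
  obtain ⟨m, hm⟩ := Set.mem_iUnion.mp hy
  have hm' : (⇑α)^[m + 1] y = 0 := hm
  set a : C := star x * x with hadef
  have ha : IsSelfAdjoint a := IsSelfAdjoint.star_mul_self x
  set n : ℕ := m + 1 with hndef
  have hiter : ‖(⇑α)^[n + 1] x‖ < Real.sqrt (δ / 2) := by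
    have h1 : (⇑α)^[n + 1] x = (⇑α)^[m + 1] (α x) := by
      rw [hndef, ← Function.iterate_succ_apply]
    have h2 : (⇑α)^[m + 1] (α x) = (⇑α)^[m + 1] (α x - y) := by
      rw [aux_iter_sub, hm', sub_zero]
    calc ‖(⇑α)^[n + 1] x‖ = ‖(⇑α)^[m + 1] (α x - y)‖ := by rw [h1, h2]
      _ ≤ ‖α x - y‖ := aux_iter_norm α _ _
      _ < Real.sqrt (δ / 2) := by rwa [dist_eq_norm] at hdist
  have hna : ‖(⇑α)^[n + 1] a‖ < δ / 2 := by
    have : (⇑α)^[n + 1] a = star ((⇑α)^[n + 1] x) * (⇑α)^[n + 1] x := by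
      rw [hadef, aux_iter_mul, aux_iter_star]
    rw [this, CStarRing.norm_star_mul_self]
    calc ‖(⇑α)^[n+1] x‖ * ‖(⇑α)^[n+1] x‖
        < Real.sqrt (δ/2) * Real.sqrt (δ/2) := by
          apply mul_lt_mul' hiter.le hiter (norm_nonneg _)
          exact Real.sqrt_pos.mpr (by positivity)
      _ = δ / 2 := Real.mul_self_sqrt (by positivity)
  -- the cutoff function
  set f : ℝ → ℝ := fun t => min 1 (max 0 (2 * t / δ - 1)) with hfdef
  have hfc : Continuous f := by fun_prop
  have hf0 : ∀ t, 0 ≤ f t := fun t => le_min zero_le_one (le_max_left _ _)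
  have hf1 : ∀ t, f t ≤ 1 := fun t => min_le_left _ _
  have hfsmall : ∀ t : ℝ, t ≤ δ / 2 → f t = 0 := by
    intro t ht
    have : 2 * t / δ - 1 ≤ 0 := by
      rw [sub_nonpos, div_le_one hδ]; linarith
    simp [hfdef, max_eq_left this, min_eq_right]
  have hfbig : ∀ t : ℝ, δ ≤ t → f t = 1 := by
    intro t ht
    have h1 : (1 : ℝ) ≤ 2 * t / δ - 1 := by
      rw [le_sub_iff_add_le, le_div_iff₀ hδ]; linarith
    have := le_max_of_le_right h1 (b := (0:ℝ))
    simp [hfdef, min_eq_left this]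
  set b : C := cfc f a with hbdef
  have hb : IsSelfAdjoint b := cfc_predicate f a
  refine ⟨x * b, ?_, ?_⟩
  · -- x * b ∈ S
    refine Set.mem_iUnion.mpr ⟨n, ?_⟩
    show (⇑α)^[n + 1] (x * b) = 0
    obtain ⟨hsa', heq⟩ := aux_iter_cfc α f hfc a ha (n + 1)
    rw [aux_iter_mul, hbdef, heq]
    have hzero : cfc f ((⇑α)^[n+1] a) = 0 := by
      rw [← cfc_zero ℝ ((⇑α)^[n+1] a)]
      apply cfc_congr
      intro t ht
      have htle : ‖t‖ ≤ ‖(⇑α)^[n+1] a‖ := spectrum.norm_le_norm_of_mem ht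
      exact hfsmall t ((le_abs_self t).trans (htle.trans hna.le))
    rw [hzero, mul_zero]
  · -- dist x (x * b) < ε
    rw [dist_eq_norm]
    set c : C := x - x * b with hcdef
    have hone : (1 : C) - b = cfc (fun t => 1 - f t) a := by
      rw [cfc_sub _ _ a (by fun_prop) (by fun_prop), cfc_const_one ℝ a, hbdef]
    have hsc : star c * c = cfc (fun t => (1 - f t) * (t * (1 - f t))) a := by
      have hc1 : c = x * (1 - b) := by rw [hcdef, mul_sub, mul_one]
      have hstarc : star c = (1 - b) * star x := by
        rw [hc1, star_mul, ((IsSelfAdjoint.one C).sub hb).star_eq]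
      have h3 : cfc (fun t : ℝ => t * (1 - f t)) a = a * cfc (fun t => 1 - f t) a := by
        rw [cfc_mul _ _ a (by fun_prop) (by fun_prop), cfc_id' ℝ a ha]
      rw [hstarc, hc1, hone, mul_assoc, ← mul_assoc (star x) x, ← hadef, ← h3,
        ← cfc_mul _ _ a (by fun_prop) (by fun_prop)]
    have hnorm : ‖star c * c‖ ≤ δ := by
      rw [hsc]
      apply norm_cfc_le hδ.le
      intro t ht
      have ht0 : 0 ≤ t := spectrum_star_mul_self_nonneg t ht
      rcases le_or_gt t δ with h | h
      · have h0 := hf0 t; have h1 := hf1 t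
        set u : ℝ := 1 - f t with hu
        have hu0 : 0 ≤ u := by rw [hu]; linarith
        have hu1 : u ≤ 1 := by rw [hu]; linarith
        have hnn : 0 ≤ u * (t * u) := by positivity
        have haux : 0 ≤ t * ((1 - u) * (1 + u)) :=
          mul_nonneg ht0 (mul_nonneg (by linarith) (by linarith))
        have hkey : u * (t * u) ≤ t := by nlinarith [haux]
        rw [Real.norm_eq_abs, abs_le]
        constructor <;> linarith
      · rw [hfbig t h.le]; simp [hδ.le]
    have hnc : ‖c‖ < ε := by
      have := CStarRing.norm_star_mul_self (x := c)
      nlinarith [norm_nonneg c, hδdef ▸ hnorm]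
    exact hnc
end

section
/- With notation as above (π faithful, π̃(c) = diag(π(α^n(c))), S = 1 ⊗ s), the induced representation S × π̃ of the ℓ¹-convolution algebra is faithful: if F = Σ_{n≥0} δ_n ⊗ c_n (ℓ¹-convergent sum, c_n ∈ A) and Σ_n S^n π̃(c_n) = 0 in B(H₀ ⊗ ℓ²(ℕ)), then c_n = 0 for all n. -/
/-! The shift is an isometry and each `π̃(c)` has norm at most `‖c‖`, since `*`-homomorphisms
of C⋆-algebras are contractive; so the series converges in operator norm and can be evaluated
vector by vector. On `δ₀ ⊗ v` its `m`-th term is `δₘ ⊗ π(cₘ) v`, hence the `m`-th coordinate of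
the vanishing sum is `π(cₘ) v`, and faithfulness of `π` gives `cₘ = 0`. -/

open scoped ENNReal

lemma norm_iterate_apply_le {E : Type*} [Norm E] {f : E → E} (hf : ∀ x, ‖f x‖ ≤ ‖x‖)
    (n : ℕ) (x : E) : ‖f^[n] x‖ ≤ ‖x‖ := by
  induction n with
  | zero => rfl
  | succ n ih => exact (Function.iterate_succ_apply' f n x ▸ hf _).trans ih

namespace lp

variable {E : Type*} [NormedAddCommGroup E] {p : ℝ≥0∞}

lemma norm_le_of_shift (hp : 0 < p.toReal) {f g : lp (fun _ : ℕ => E) p}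
    (hg0 : g 0 = 0) (hg : ∀ n, g (n + 1) = f n) : ‖g‖ ≤ ‖f‖ := by
  refine norm_le_of_tsum_le hp (norm_nonneg' f) (le_of_eq ?_)
  rw [((lp.memℓp g).summable hp).tsum_eq_zero_add, norm_rpow_eq_tsum hp f]
  simp [hg0, hg, hp.ne']

end lp

section Shift

variable {𝕜 E : Type*} [NontriviallyNormedField 𝕜] [NormedAddCommGroup E] [NormedSpace 𝕜 E]
  {p : ℝ≥0∞} [Fact (1 ≤ p)] {S : lp (fun _ : ℕ => E) p →L[𝕜] lp (fun _ : ℕ => E) p}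

lemma norm_shift_pow_apply_le (hp : 0 < p.toReal) (hS0 : ∀ f, S f 0 = 0)
    (hS : ∀ f n, S f (n + 1) = f n) (m : ℕ) (f : lp (fun _ : ℕ => E) p) :
    ‖(S ^ m) f‖ ≤ ‖f‖ := by
  rw [FunLike.coe_pow_eq_iterate]
  exact norm_iterate_apply_le (fun g => lp.norm_le_of_shift hp (hS0 g) (hS g)) m f

lemma shift_single (hS0 : ∀ f, S f 0 = 0) (hS : ∀ f n, S f (n + 1) = f n) (k : ℕ) (x : E) :
    S (lp.single p k x) = lp.single p (k + 1) x := by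
  ext (_ | n)
  · rw [hS0, lp.single_apply_ne p _ _ (Nat.succ_ne_zero k).symm]
  · simp only [hS, lp.single_apply, Pi.single_apply, add_left_inj]

lemma shift_pow_single (hS0 : ∀ f, S f 0 = 0) (hS : ∀ f n, S f (n + 1) = f n) (m : ℕ) (x : E) :
    (S ^ m) (lp.single p 0 x) = lp.single p m x := by
  induction m with
  | zero => rfl
  | succ m ih => rw [pow_succ', mul_apply_eq_comp, ih, shift_single hS0 hS]

end Shift

namespace lp

variable {𝕜 ι : Type*} {E : ι → Type*} [RCLike 𝕜] [∀ i, NormedAddCommGroup (E i)]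
  [∀ i, NormedSpace 𝕜 (E i)] {p : ℝ≥0∞} {T : lp E p → lp E p} {D : ∀ i, E i →L[𝕜] E i}

lemma diag_single [DecidableEq ι] (hT : ∀ f i, T f i = D i (f i)) (i : ι) (x : E i) :
    T (lp.single p i x) = lp.single p i (D i x) := by
  ext j
  rw [hT]
  obtain rfl | hj := eq_or_ne j i
  · simp only [lp.single_apply_self]
  · simp only [lp.single_apply_ne p i _ hj, map_zero]

lemma norm_diag_apply_le [Fact (1 ≤ p)] (hT : ∀ f i, T f i = D i (f i)) {C : ℝ} (hC : 0 ≤ C)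
    (hD : ∀ i, ‖D i‖ ≤ C) (f : lp E p) : ‖T f‖ ≤ C * ‖f‖ := by
  have hp : p ≠ 0 := (zero_lt_one.trans_le Fact.out).ne'
  calc ‖T f‖ ≤ ‖(C : 𝕜) • f‖ := norm_mono hp fun i => by
        rw [hT, coeFn_smul, Pi.smul_apply, norm_smul, RCLike.norm_ofReal, abs_of_nonneg hC]
        exact (D i).le_of_opNorm_le (hD i) (f i)
    _ = C * ‖f‖ := by rw [norm_smul, RCLike.norm_ofReal, abs_of_nonneg hC]

lemma eq_zero_of_hasSum_single [DecidableEq ι] [Fact (1 ≤ p)] {x : ∀ i, E i}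
    (h : HasSum (fun i => lp.single p i (x i)) 0) (i : ι) : x i = 0 := by
  have hi : HasSum (fun j => lp.single p j (x j) i) 0 :=
    Pi.hasSum.mp (h.map (coeFnAddMonoidHom E p) uniformContinuous_coe.continuous) i
  simpa using (hi.unique (hasSum_single i fun j hj => lp.single_apply_ne p j _ hj.symm)).symm

end lp

/-- With `π : A → B(H₀)` faithful, `π̃(c) = diag (π(αⁿ(c)))ₙ` and `S = 1 ⊗ s` the
unilateral shift on `ℓ²(ℕ, H₀)`, the induced representation `S × π̃` of the
ℓ¹-convolution algebra is faithful: if `Σₙ ‖cₙ‖ < ∞` and `Σₙ Sⁿ π̃(cₙ) = 0` in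
`B(H₀ ⊗ ℓ²(ℕ))`, then `cₙ = 0` for all `n`. -/
theorem shift_diag_representation_faithful
    {A : Type*} [NormedRing A] [StarRing A] [CStarRing A] [CompleteSpace A]
    [NormedAlgebra ℂ A] [StarModule ℂ A]
    {H₀ : Type*} [NormedAddCommGroup H₀] [InnerProductSpace ℂ H₀] [CompleteSpace H₀]
    (π : A →⋆ₐ[ℂ] (H₀ →L[ℂ] H₀)) (hπ : Function.Injective π)
    (α : A →⋆ₐ[ℂ] A)
    (S : lp (fun _ : ℕ => H₀) 2 →L[ℂ] lp (fun _ : ℕ => H₀) 2)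
    (T : A → (lp (fun _ : ℕ => H₀) 2 →L[ℂ] lp (fun _ : ℕ => H₀) 2))
    (hS0 : ∀ f : lp (fun _ : ℕ => H₀) 2, (S f) 0 = 0)
    (hS : ∀ (f : lp (fun _ : ℕ => H₀) 2) (n : ℕ), (S f) (n + 1) = f n)
    (hT : ∀ (c : A) (f : lp (fun _ : ℕ => H₀) 2) (n : ℕ),
      (T c f) n = π ((⇑α)^[n] c) (f n))
    (c : ℕ → A) (hc : Summable fun n => ‖c n‖)
    (hzero : ∑' n : ℕ, S ^ n * T (c n) = 0) :
    ∀ n, c n = 0 := by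
  let _ : CStarAlgebra A := {}
  have hD (a : A) (n : ℕ) : ‖π ((⇑α)^[n] a)‖ ≤ ‖a‖ :=
    (NonUnitalStarAlgHom.norm_apply_le π _).trans
      (norm_iterate_apply_le (NonUnitalStarAlgHom.norm_apply_le α) n a)
  have hsum : Summable fun n => S ^ n * T (c n) :=
    hc.of_norm_bounded fun n => ContinuousLinearMap.opNorm_le_bound _ (norm_nonneg _) fun f =>
      (norm_shift_pow_apply_le (by norm_num) hS0 hS n _).trans
        (lp.norm_diag_apply_le (hT _) (norm_nonneg _) (hD _) f)
  intro n
  apply hπ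
  ext v
  have hterm (m : ℕ) : (S ^ m * T (c m)) (lp.single 2 0 v) = lp.single 2 m (π (c m) v) := by
    rw [mul_apply_eq_comp, lp.diag_single (hT _), shift_pow_single hS0 hS, Function.iterate_zero,
      id_eq]
  have hsingle : HasSum (fun m => lp.single 2 m (π (c m) v)) 0 := by
    have h := hsum.hasSum.mapL (ContinuousLinearMap.apply ℂ _ (lp.single 2 0 v))
    simp only [ContinuousLinearMap.apply_apply, hterm, hzero, zero_apply] at h
    exact h
  simpa using lp.eq_zero_of_hasSum_single hsingle n
end

section
/- Let C be a C*-algebra with a unital *-endomorphism α, let M = M(ker α) be the multiplier algebra of ker α with θ : C → M the canonical unital *-homomorphism extending the embedding ker α ↪ M, let T = c₀(θ(C)) and B = C ⊕ T. Define β : B → B by β(c, (x₁, x₂, …)) = (α(c), (θ(c), x₁, x₂, …)). Then β is an injective *-homomorphism. -/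
open Filter Topology

/-!
`β` is `α` on the first coordinate and prepends `θ c` on the second, so all the algebraic
properties hold coordinatewise. Injectivity on `B` comes down to `(α c, θ c)` determining `c`,
i.e. to `θ` being injective on `ker α`.
-/

def seqCons {X : Type*} (a : X) (f : ℕ → X) : ℕ → X :=
  fun n => if n = 0 then a else f (n - 1)

section seqCons

variable {X : Type*}

@[simp]
theorem seqCons_zero (a : X) (f : ℕ → X) : seqCons a f 0 = a := rfl

@[simp]
theorem seqCons_succ (a : X) (f : ℕ → X) (n : ℕ) : seqCons a f (n + 1) = f n := rfl

theorem seqCons_inj {a b : X} {f g : ℕ → X} :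
    seqCons a f = seqCons b g ↔ a = b ∧ f = g :=
  ⟨fun h => ⟨by simpa using congrFun h 0, funext fun n => by simpa using congrFun h (n + 1)⟩,
    fun ⟨hab, hfg⟩ => hab ▸ hfg ▸ rfl⟩

theorem seqCons_mem {s : Set X} {a : X} {f : ℕ → X} (ha : a ∈ s) (hf : ∀ n, f n ∈ s) (n : ℕ) :
    seqCons a f n ∈ s := by
  cases n with
  | zero => exact ha
  | succ n => exact hf n

theorem tendsto_seqCons_atTop {a : X} {f : ℕ → X} {l : Filter X} (hf : Tendsto f atTop l) :
    Tendsto (seqCons a f) atTop l := by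
  rw [← tendsto_add_atTop_iff_nat 1]
  exact hf

theorem seqCons_add [Add X] (a b : X) (f g : ℕ → X) :
    seqCons (a + b) (f + g) = seqCons a f + seqCons b g := by
  ext (_ | n) <;> rfl

theorem seqCons_mul [Mul X] (a b : X) (f g : ℕ → X) :
    seqCons (a * b) (f * g) = seqCons a f * seqCons b g := by
  ext (_ | n) <;> rfl

theorem seqCons_star [Star X] (a : X) (f : ℕ → X) :
    seqCons (star a) (star f) = star (seqCons a f) := by
  ext (_ | n) <;> rfl

end seqCons

theorem eq_of_map_eq_of_map_eq {C D E F G : Type*} [AddGroup C] [AddGroup D] [AddGroup E]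
    [FunLike F C D] [AddMonoidHomClass F C D] [FunLike G C E] [AddMonoidHomClass G C E]
    {f : F} {g : G} (h : ∀ c, f c = 0 → g c = 0 → c = 0) {c d : C}
    (hf : f c = f d) (hg : g c = g d) : c = d :=
  sub_eq_zero.mp <| h _ (by rw [map_sub, hf, sub_self]) (by rw [map_sub, hg, sub_self])

theorem addTail_injective_star_hom_general
    {C : Type*} [NormedRing C] [StarRing C]
    [NormedAlgebra ℂ C]
    {M : Type*} [NormedRing M] [StarRing M]
    [NormedAlgebra ℂ M]
    (α : C →⋆ₐ[ℂ] C) (θ : C →⋆ₐ[ℂ] M)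
    (hθ : ∀ c : C, α c = 0 → θ c = 0 → c = 0) :
    let β : C × (ℕ → M) → C × (ℕ → M) :=
      fun p => (α p.1, fun n => if n = 0 then θ p.1 else p.2 (n - 1))
    let B : Set (C × (ℕ → M)) :=
      {p | (∀ n, p.2 n ∈ Set.range θ) ∧ Tendsto p.2 atTop (𝓝 0)}
    Set.MapsTo β B B ∧ Set.InjOn β B ∧
      (∀ p q : C × (ℕ → M), β (p + q) = β p + β q) ∧
      (∀ p q : C × (ℕ → M), β (p * q) = β p * β q) ∧
      (∀ p : C × (ℕ → M), β (star p) = star (β p)) := by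
  intro β B
  have hβ : β = fun p => (α p.1, seqCons (θ p.1) p.2) := rfl
  simp only [hβ]
  refine ⟨fun p ⟨hrange, htendsto⟩ => ⟨seqCons_mem (Set.mem_range_self _) hrange,
    tendsto_seqCons_atTop htendsto⟩, fun p _ q _ hpq => ?_, fun p q => ?_, fun p q => ?_,
    fun p => ?_⟩
  · obtain ⟨hα, hθpq, h2⟩ : α p.1 = α q.1 ∧ θ p.1 = θ q.1 ∧ p.2 = q.2 := by
      simpa only [Prod.mk.injEq, seqCons_inj] using hpq
    exact Prod.ext (eq_of_map_eq_of_map_eq hθ hα hθpq) h2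
  · exact Prod.ext (map_add α _ _)
      ((congrArg (seqCons · _) (map_add θ _ _)).trans (seqCons_add _ _ _ _))
  · exact Prod.ext (map_mul α _ _)
      ((congrArg (seqCons · _) (map_mul θ _ _)).trans (seqCons_mul _ _ _ _))
  · exact Prod.ext (map_star α _)
      ((congrArg (seqCons · _) (map_star θ _)).trans (seqCons_star _ _))

/-- Let `C` be a unital C*-algebra with unital *-endomorphism `α`, let `M = M(ker α)` be
the multiplier algebra of `ker α`, with `θ : C → M` the canonical unital *-homomorphism
extending the embedding `ker α ↪ M` (the extension property being encoded by the
hypothesis `hθ`: `θ` is injective on `ker α`), let `T = c₀(θ(C))` and `B = C ⊕ T`.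
Then `β : B → B`, `β(c, (x₁, x₂, …)) = (α(c), (θ(c), x₁, x₂, …))` is an injective
*-homomorphism: it maps `B` to `B`, is injective on `B`, and is additive,
multiplicative and star-preserving. -/
theorem addTail_injective_star_hom
    {C : Type*} [NormedRing C] [StarRing C] [CStarRing C] [CompleteSpace C]
    [NormedAlgebra ℂ C] [StarModule ℂ C]
    {M : Type*} [NormedRing M] [StarRing M] [CStarRing M] [CompleteSpace M]
    [NormedAlgebra ℂ M] [StarModule ℂ M]
    (α : C →⋆ₐ[ℂ] C) (θ : C →⋆ₐ[ℂ] M)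
    (hθ : ∀ c : C, α c = 0 → θ c = 0 → c = 0) :
    let β : C × (ℕ → M) → C × (ℕ → M) :=
      fun p => (α p.1, fun n => if n = 0 then θ p.1 else p.2 (n - 1))
    let B : Set (C × (ℕ → M)) :=
      {p | (∀ n, p.2 n ∈ Set.range θ) ∧ Tendsto p.2 atTop (𝓝 0)}
    Set.MapsTo β B B ∧ Set.InjOn β B ∧
      (∀ p q : C × (ℕ → M), β (p + q) = β p + β q) ∧
      (∀ p q : C × (ℕ → M), β (p * q) = β p * β q) ∧
      (∀ p : C × (ℕ → M), β (star p) = star (β p)) :=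
  addTail_injective_star_hom_general α θ hθ
end

section
/- Let C be a unital C*-algebra and let α be a unital *-automorphism of C. Then the system (C, α) is minimal (no nontrivial closed two-sided ideal J with α(J) ⊆ J) if and only if it is bi-minimal (no nontrivial closed two-sided ideal J with α(J) = J). -/
/-- For a unital *-automorphism `α` of a unital C*-algebra `C`, the system `(C, α)` is
minimal (the only closed two-sided ideals `J` with `α(J) ⊆ J` are `(0)` and `C`)
if and only if it is bi-minimal (the only closed two-sided ideals `J` with
`α(J) = J` are `(0)` and `C`). -/
theorem minimal_iff_biminimal
    {C : Type*} [NormedRing C] [StarRing C] [CStarRing C] [CompleteSpace C]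
    [NormedAlgebra ℂ C] [StarModule ℂ C]
    (α : C ≃⋆ₐ[ℂ] C) :
    (∀ J : TwoSidedIdeal C, IsClosed (J : Set C) → (∀ c ∈ J, α c ∈ J) →
        J = ⊥ ∨ J = ⊤) ↔
      (∀ J : TwoSidedIdeal C, IsClosed (J : Set C) → (⇑α '' (J : Set C) = (J : Set C)) →
        J = ⊥ ∨ J = ⊤) := by
  letI : CStarAlgebra C := {}
  have hisom : Isometry (⇑α) := NonUnitalStarAlgHom.isometry α α.injective
  have hisom' : Isometry (⇑α.symm) := NonUnitalStarAlgHom.isometry α.symm α.symm.injective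
  -- α as a homeomorphism
  let e : C ≃ₜ C :=
    { toFun := ⇑α
      invFun := ⇑α.symm
      left_inv := α.symm_apply_apply
      right_inv := α.apply_symm_apply
      continuous_toFun := hisom.continuous
      continuous_invFun := hisom'.continuous }
  constructor
  · intro h J hJc hJeq
    exact h J hJc fun c hc => by
      have : α c ∈ ⇑α '' (J : Set C) := Set.mem_image_of_mem _ hc
      rw [hJeq] at this
      exact this
  · intro h J hJc hJα
    -- iterates of α are additive/multiplicative
    have hadd : ∀ (n : ℕ) (x y : C), (⇑α)^[n] (x + y) = (⇑α)^[n] x + (⇑α)^[n] y := by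
      intro n
      induction n with
      | zero => simp
      | succ n ih => intro x y; simp [Function.iterate_succ_apply, map_add, ih]
    have hneg : ∀ (n : ℕ) (x : C), (⇑α)^[n] (-x) = -(⇑α)^[n] x := by
      intro n
      induction n with
      | zero => simp
      | succ n ih => intro x; simp [Function.iterate_succ_apply, map_neg, ih]
    have hmul : ∀ (n : ℕ) (x y : C), (⇑α)^[n] (x * y) = (⇑α)^[n] x * (⇑α)^[n] y := by
      intro n
      induction n with
      | zero => simp
      | succ n ih => intro x y; simp [Function.iterate_succ_apply, map_mul, ih]
    set K : Set C := ⋃ n : ℕ, (⇑α)^[n] ⁻¹' (J : Set C) with hK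
    have memK : ∀ x : C, x ∈ K ↔ ∃ n : ℕ, (⇑α)^[n] x ∈ J := by
      intro x; simp [hK]
    -- K is closed under the ideal operations
    have K_zero : (0 : C) ∈ K := (memK 0).2 ⟨0, by simpa using J.zero_mem⟩
    have K_add : ∀ {x y : C}, x ∈ K → y ∈ K → x + y ∈ K := by
      intro x y hx hy
      obtain ⟨m, hm⟩ := (memK x).1 hx
      obtain ⟨n, hn⟩ := (memK y).1 hy
      -- push both into level `max m n`
      have mono : ∀ {k l : ℕ} {z : C}, k ≤ l → (⇑α)^[k] z ∈ J → (⇑α)^[l] z ∈ J := by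
        intro k l z hkl hz
        obtain ⟨d, rfl⟩ := Nat.exists_eq_add_of_le hkl
        induction d with
        | zero => simpa using hz
        | succ d ih =>
          have h1 : (⇑α)^[k + d] z ∈ J := ih (Nat.le_add_right _ _)
          have h2 := hJα _ h1
          rw [← Function.iterate_succ_apply' (⇑α) (k + d) z] at h2
          exact h2
      refine (memK _).2 ⟨max m n, ?_⟩
      rw [hadd]
      exact J.add_mem (mono (le_max_left m n) hm) (mono (le_max_right m n) hn)
    have K_neg : ∀ {x : C}, x ∈ K → -x ∈ K := by
      intro x hx
      obtain ⟨n, hn⟩ := (memK x).1 hx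
      exact (memK _).2 ⟨n, by rw [hneg]; exact J.neg_mem hn⟩
    have K_mul_left : ∀ {x y : C}, y ∈ K → x * y ∈ K := by
      intro x y hy
      obtain ⟨n, hn⟩ := (memK y).1 hy
      exact (memK _).2 ⟨n, by rw [hmul]; exact J.mul_mem_left _ _ hn⟩
    have K_mul_right : ∀ {x y : C}, x ∈ K → x * y ∈ K := by
      intro x y hx
      obtain ⟨n, hn⟩ := (memK x).1 hx
      exact (memK _).2 ⟨n, by rw [hmul]; exact J.mul_mem_right _ _ hn⟩
    -- the closed two-sided ideal generated: closure of K
    let I : TwoSidedIdeal C := TwoSidedIdeal.mk' (closure K)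
      (subset_closure K_zero)
      (fun {x y} hx hy =>
        map_mem_closure₂ continuous_add hx hy fun a ha b hb => K_add ha hb)
      (fun {x} hx => map_mem_closure continuous_neg hx fun a ha => K_neg ha)
      (fun {x y} hy =>
        map_mem_closure (f := fun a => x * a) (continuous_mul_left x) hy fun a ha => K_mul_left ha)
      (fun {x y} hx =>
        map_mem_closure (f := fun a => a * y) (continuous_mul_right y) hx fun a ha => K_mul_right ha)
    have hIcoe : (I : Set C) = closure K := TwoSidedIdeal.coe_mk' _ _ _ _ _ _
    -- α maps K onto K
    have hαK : ⇑α '' K = K := by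
      ext x
      constructor
      · rintro ⟨y, hy, rfl⟩
        obtain ⟨n, hn⟩ := (memK y).1 hy
        rcases n with _ | m
        · exact (memK _).2 ⟨0, by simpa using hJα _ (by simpa using hn)⟩
        · refine (memK _).2 ⟨m, ?_⟩
          rwa [Function.iterate_succ_apply] at hn
      · intro hx
        obtain ⟨n, hn⟩ := (memK x).1 hx
        refine ⟨α.symm x, (memK _).2 ⟨n + 1, ?_⟩, α.apply_symm_apply x⟩
        rw [Function.iterate_succ_apply]
        simpa using hn
    have hαI : ⇑α '' (I : Set C) = (I : Set C) := by
      rw [hIcoe]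
      calc ⇑α '' closure K = e '' closure K := rfl
        _ = closure (e '' K) := e.image_closure K
        _ = closure K := by rw [show e '' K = K from hαK]
    rcases h I (hIcoe ▸ isClosed_closure) hαI with hbot | htop
    · -- then J = ⊥
      left
      refine le_antisymm (fun x hx => ?_) bot_le
      have hxI : x ∈ I := (TwoSidedIdeal.mem_mk' _ _ _ _ _ _ x).2
        (subset_closure ((memK x).2 ⟨0, by simpa using hx⟩))
      rw [hbot] at hxI
      exact hxI
    · -- then 1 ∈ closure K, find an almost-unit in K
      right
      have h1 : (1 : C) ∈ closure K := by
        have : (1 : C) ∈ I := by rw [htop]; exact TwoSidedIdeal.mem_top C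
        rwa [← TwoSidedIdeal.mem_mk' (closure K)]
      obtain ⟨x, hxK, hx1⟩ := Metric.mem_closure_iff.1 h1 1 one_pos
      have hxu : IsUnit x := by
        have hnorm : ‖(1 : C) - x‖ < 1 := by rwa [← dist_eq_norm]
        simpa using isUnit_one_sub_of_norm_lt_one hnorm
      obtain ⟨n, hn⟩ := (memK x).1 hxK
      -- α^[n] x is a unit in J, hence J = ⊤
      have hxu' : IsUnit ((⇑α)^[n] x) := by
        clear hn
        induction n with
        | zero => exact hxu
        | succ n ih =>
          rw [Function.iterate_succ_apply']
          exact ih.map α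
      obtain ⟨u, hu⟩ := hxu'
      apply TwoSidedIdeal.eq_top
      have : (↑u⁻¹ : C) * (⇑α)^[n] x ∈ J := J.mul_mem_left _ _ hn
      rwa [← hu, Units.inv_mul] at this
end

section
/- Let C be a unital C*-algebra, α : C → C an injective unital *-endomorphism, C_∞ the direct limit of (C, α) containing C, and α_∞ its induced automorphism. If (C, α) is minimal, then every nonzero α_∞-invariant closed ideal J of C_∞ satisfies J ∩ C ≠ (0); moreover J ∩ C is an α-invariant ideal of C, hence J ∩ C = C and J = C_∞. In particular minimality of (C, α) implies minimality of (C_∞, α_∞). -/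
/-!
Let `J ≠ 0` be a closed `α_∞`-invariant ideal of `C_∞` and `0 ≠ x = a⋆a ∈ J`. By density some
`α_∞⁻ⁿ(c)`, `c ∈ C`, lies within `‖x‖/4` of `x`; applying the isometry `α_∞ⁿ` gives a positive
`y ∈ J` with `‖c - y‖ < ‖y‖/4`, and replacing `c` by its real part makes it self-adjoint. With
`ε = ‖c - y‖` we have `c - ε ≤ y`, so `(c - ε)₊³ = (c - ε)₊ (c - ε) (c - ε)₊ ≤ (c - ε)₊ y (c - ε)₊`
lies in `J`, closed ideals of a C⋆-algebra being hereditary; and it is nonzero, since `c ≤ ε`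
would force `y ≤ 2ε`. Hence `J ∩ C` is a nonzero closed `α`-invariant ideal of `C`, so it is all
of `C` by minimality, and `1 ∈ J`.
-/

open scoped CStarAlgebra ComplexStarModule

lemma TwoSidedIdeal.coe_comap {R S F : Type*} [NonUnitalNonAssocRing R]
    [NonUnitalNonAssocRing S] [FunLike F R S] [NonUnitalRingHomClass F R S]
    (J : TwoSidedIdeal S) (f : F) : (J.comap f : Set R) = f ⁻¹' J :=
  Set.ext fun _ => TwoSidedIdeal.mem_comap f

section CStarAlgebra

variable {A : Type*} [CStarAlgebra A]

namespace TwoSidedIdeal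

lemma cfcₙ_mem_of_isClosed (J : TwoSidedIdeal A) (hJ : IsClosed (J : Set A)) {a : A}
    (ha : IsSelfAdjoint a) (haJ : a ∈ J) (f : ℝ → ℝ) : cfcₙ f a ∈ J := by
  let S : NonUnitalStarSubalgebra ℝ A :=
    { carrier := {x | x ∈ J ∧ star x ∈ J}
      add_mem' := fun hx hy => ⟨J.add_mem hx.1 hy.1, by simpa using J.add_mem hx.2 hy.2⟩
      zero_mem' := ⟨J.zero_mem, by simp⟩
      mul_mem' := fun hx hy =>
        ⟨J.mul_mem_left _ _ hy.1, by simpa using J.mul_mem_left _ _ hx.2⟩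
      smul_mem' := fun r x hx =>
        ⟨by rw [Algebra.smul_def]; exact J.mul_mem_left _ _ hx.1,
          by rw [star_smul, star_trivial, Algebra.smul_def]; exact J.mul_mem_left _ _ hx.2⟩
      star_mem' := fun hx => ⟨hx.2, by simpa using hx.1⟩ }
  have hS : IsClosed (S : Set A) := hJ.inter (hJ.preimage continuous_star)
  exact (NonUnitalStarAlgebra.elemental.le_of_mem hS ⟨haJ, by rwa [ha.star_eq]⟩
    (cfcₙ_mem_elemental f a)).1

variable [PartialOrder A] [StarOrderedRing A]

lemma mem_of_nonneg_of_le (J : TwoSidedIdeal A) (hJ : IsClosed (J : Set A)) {z w : A}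
    (hz : 0 ≤ z) (hzw : z ≤ w) (hwJ : w ∈ J) : z ∈ J := by
  have hw : 0 ≤ w := hz.trans hzw
  obtain ⟨s, hs, rfl⟩ : ∃ s : A, IsSelfAdjoint s ∧ z = s * s :=
    ⟨CFC.sqrt z, (CFC.sqrt_nonneg z).isSelfAdjoint, (CFC.sqrt_mul_sqrt_self z).symm⟩
  suffices hsJ : s ∈ J from J.mul_mem_left s s hsJ
  rw [← SetLike.mem_coe, ← hJ.closure_eq, Metric.mem_closure_iff]
  intro ε hε
  -- `1 - e ∈ J` and `‖s e‖² = ‖e (s * s) e‖ ≤ ‖e w e‖ ≤ κ`, so `s (1 - e) ∈ J` is close to `s`.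
  set κ := ε / 2 * (ε / 2)
  have hκ : 0 < κ := by positivity
  set g : ℝ → ℝ := fun t => max (1 - t / κ) 0
  set e := cfc g w
  have he : IsSelfAdjoint e := cfc_predicate g w
  have hu : 1 - e ∈ J := by
    have : cfcₙ (fun t => 1 - g t) w = 1 - e := by
      rw [cfcₙ_eq_cfc (by fun_prop) (by simp [g]), cfc_sub .., cfc_const_one ℝ w]
    exact this ▸ J.cfcₙ_mem_of_isClosed hJ hw.isSelfAdjoint hwJ _
  have hewe : ‖e * w * e‖ ≤ κ := by
    have hcfc : e * w * e = cfc (fun t => g t * t * g t) w := by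
      rw [cfc_mul .., cfc_mul .., cfc_id' ℝ w]
    rw [hcfc]
    refine norm_cfc_le hκ.le fun t ht => ?_
    have ht0 : 0 ≤ t := spectrum_nonneg_of_nonneg hw ht
    rw [Real.norm_eq_abs, abs_le]
    rcases le_total t κ with htκ | htκ
    · have hgt : g t = 1 - t / κ := max_eq_left (by rw [sub_nonneg, div_le_one hκ]; exact htκ)
      have hg0 : 0 ≤ g t := le_max_right _ _
      have hg1 : g t ≤ 1 := by rw [hgt]; linarith [div_nonneg ht0 hκ.le]
      constructor <;>
        nlinarith [mul_nonneg hg0 ht0, mul_le_mul_of_nonneg_left hg1 (mul_nonneg hg0 ht0)]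
    · have hgt : g t = 0 := max_eq_right (by rw [sub_nonpos, one_le_div hκ]; exact htκ)
      simp [hgt, hκ.le]
  have hse : ‖s * e‖ * ‖s * e‖ ≤ κ :=
    calc ‖s * e‖ * ‖s * e‖ = ‖e * (s * s) * e‖ := by
          rw [← CStarRing.norm_star_mul_self, star_mul, he.star_eq, hs.star_eq]
          simp only [mul_assoc]
      _ ≤ ‖e * w * e‖ := CStarAlgebra.norm_le_norm_of_nonneg_of_le (he.conjugate_nonneg hz)
          (he.conjugate_le_conjugate hzw)
      _ ≤ κ := hewe
  refine ⟨s * (1 - e), J.mul_mem_left _ _ hu, ?_⟩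
  rw [dist_eq_norm, mul_sub, mul_one, sub_sub_cancel]
  have : ‖s * e‖ ≤ ε / 2 := (mul_self_le_mul_self_iff (norm_nonneg _) (by positivity)).mpr hse
  linarith

lemma cfc_posPart_sub_cube_mem (J : TwoSidedIdeal A) (hJ : IsClosed (J : Set A)) {b y : A}
    (hb : IsSelfAdjoint b) (hyJ : y ∈ J) {ε : ℝ} (hby : b ≤ algebraMap ℝ A ε + y) :
    cfc (fun t => max (t - ε) 0 ^ 3) b ∈ J := by
  set f : ℝ → ℝ := fun t => max (t - ε) 0
  have hf : IsSelfAdjoint (cfc f b) := cfc_predicate f b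
  have hfactor : cfc (fun t => f t ^ 3) b = cfc f b * (b - algebraMap ℝ A ε) * cfc f b := by
    have hsub : b - algebraMap ℝ A ε = cfc (fun t => t - ε) b := by
      rw [cfc_sub .., cfc_id' .., cfc_const ..]
    rw [hsub, ← cfc_mul .., ← cfc_mul ..]
    refine cfc_congr fun t _ => ?_
    rcases le_total t ε with h | h
    · simp [f, max_eq_right (sub_nonpos.mpr h)]
    · simp only [f, max_eq_left (sub_nonneg.mpr h)]
      ring
  refine J.mem_of_nonneg_of_le hJ (cfc_nonneg fun t _ => by positivity) ?_
    (J.mul_mem_right _ (cfc f b) (J.mul_mem_left (cfc f b) y hyJ))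
  rw [hfactor]
  exact hf.conjugate_le_conjugate (sub_le_iff_le_add'.mpr hby)

end TwoSidedIdeal

variable [PartialOrder A] [StarOrderedRing A]

lemma cfc_posPart_sub_cube_ne_zero {b : A} (hb : IsSelfAdjoint b) {ε : ℝ}
    (h : ¬ b ≤ algebraMap ℝ A ε) : cfc (fun t => max (t - ε) 0 ^ 3) b ≠ 0 := by
  intro h0
  refine h (le_algebraMap_of_spectrum_le fun t ht => ?_)
  have : max (t - ε) 0 ^ 3 = 0 :=
    eqOn_of_cfc_eq_cfc (h0.trans (cfc_zero ℝ b).symm) (by fun_prop) (by fun_prop) hb ht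
  simpa using this

lemma TwoSidedIdeal.exists_cfc_mem_ne_zero (J : TwoSidedIdeal A) (hJ : IsClosed (J : Set A))
    {b y : A} (hb : IsSelfAdjoint b) (hy : 0 ≤ y) (hyJ : y ∈ J) (h : 2 * ‖b - y‖ < ‖y‖) :
    ∃ f : ℝ → ℝ, Continuous f ∧ cfc f b ∈ J ∧ cfc f b ≠ 0 := by
  set ε := ‖b - y‖
  have hby : b ≤ algebraMap ℝ A ε + y :=
    sub_le_iff_le_add.mp (hb.sub hy.isSelfAdjoint).le_algebraMap_norm_self
  have hbε : ¬ b ≤ algebraMap ℝ A ε := by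
    intro hbε
    have hyb : y - b ≤ algebraMap ℝ A ε := by
      simpa [ε, norm_sub_rev] using (hy.isSelfAdjoint.sub hb).le_algebraMap_norm_self
    have : y ≤ algebraMap ℝ A (2 * ε) := by
      rw [two_mul, map_add]
      simpa using add_le_add hyb hbε
    linarith [(CStarAlgebra.norm_le_iff_le_algebraMap y (by positivity) hy).mpr this]
  exact ⟨_, by fun_prop, J.cfc_posPart_sub_cube_mem hJ hb hyJ hby,
    cfc_posPart_sub_cube_ne_zero hb hbε⟩

end CStarAlgebra

lemma TwoSidedIdeal.exists_map_mem_ne_zero {C D : Type*} [CStarAlgebra C] [CStarAlgebra D]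
    [PartialOrder D] [StarOrderedRing D] (ι : C →⋆ₐ[ℂ] D) (φ : D ≃⋆ₐ[ℂ] D)
    (hdense : Dense (⋃ n : ℕ, (⇑φ.symm)^[n] '' Set.range ι)) (J : TwoSidedIdeal D)
    (hJ : IsClosed (J : Set D)) (hφJ : ∀ x ∈ J, φ x ∈ J) (hJ0 : J ≠ ⊥) :
    ∃ c : C, ι c ≠ 0 ∧ ι c ∈ J := by
  obtain ⟨a, haJ, ha0⟩ : ∃ a ∈ J, a ≠ 0 := by
    by_contra! h
    exact hJ0 (eq_bot_iff.mpr fun x hx => (TwoSidedIdeal.mem_bot (R := D)).mpr (h x hx))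
  set x := star a * a
  have hx : 0 < ‖x‖ := by
    rw [CStarRing.norm_star_mul_self]
    exact mul_pos (norm_pos_iff.mpr ha0) (norm_pos_iff.mpr ha0)
  obtain ⟨d, hd, hxd⟩ := hdense.exists_dist_lt x (ε := ‖x‖ / 4) (by positivity)
  simp only [Set.mem_iUnion, Set.mem_image, Set.mem_range] at hd
  obtain ⟨n, _, ⟨c, rfl⟩, rfl⟩ := hd
  have hψ : (⇑φ)^[n] = ⇑(φ ^ n) := (StarAlgEquiv.coe_pow φ n).symm
  have hψc : (φ ^ n) ((⇑φ.symm)^[n] (ι c)) = ι c := by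
    rw [← hψ]
    exact Function.LeftInverse.iterate φ.apply_symm_apply n _
  set y := (φ ^ n) x
  have hyJ : y ∈ J := by
    have := Set.MapsTo.iterate hφJ n (J.mul_mem_left (star a) a haJ)
    rwa [hψ] at this
  have hy : 0 ≤ y := by
    simp only [y, x, map_mul, map_star]
    exact star_mul_self_nonneg _
  have hyx : ‖y‖ = ‖x‖ := StarAlgEquiv.norm_map _ _
  have hcy : ‖ι c - y‖ < ‖y‖ / 4 := by
    rw [hyx, ← hψc, ← map_sub, StarAlgEquiv.norm_map, ← dist_eq_norm,
      dist_comm]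
    exact hxd
  have hb : 2 * ‖(ℜ (ι c) : D) - y‖ < ‖y‖ := by
    have hre : (ℜ (ι c) : D) - y = ℜ (ι c - y) := by
      rw [map_sub, AddSubgroupClass.coe_sub, hy.isSelfAdjoint.coe_realPart]
    have hnorm : ‖(ℜ (ι c - y) : D)‖ ≤ ‖ι c - y‖ :=
      (AddSubgroupClass.coe_norm _ _).symm.trans_le (realPart.norm_le _)
    rw [hre]
    linarith
  obtain ⟨f, hf, hfJ, hf0⟩ := J.exists_cfc_mem_ne_zero hJ (ℜ (ι c)).2 hy hyJ hb
  have hι : ι (cfc f (ℜ c : C)) = cfc f (ℜ (ι c) : D) := by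
    refine (ι.map_cfc f (ℜ c : C) hf.continuousOn (map_continuous ι) (ℜ c).2
      ((ℜ c).2.map ι)).trans ?_
    rw [map_realPart]
  exact ⟨cfc f (ℜ c : C), hι ▸ hf0, hι ▸ hfJ⟩

theorem minimal_direct_limit_general
    {C : Type*} [NormedRing C] [StarRing C] [CStarRing C] [CompleteSpace C]
    [NormedAlgebra ℂ C] [StarModule ℂ C]
    {D : Type*} [NormedRing D] [StarRing D] [CStarRing D] [CompleteSpace D]
    [NormedAlgebra ℂ D] [StarModule ℂ D]
    (α : C →⋆ₐ[ℂ] C)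
    (ι : C →⋆ₐ[ℂ] D)
    (αinf : D ≃⋆ₐ[ℂ] D)
    (hext : ∀ c : C, αinf (ι c) = ι (α c))
    (hdense : Dense (⋃ n : ℕ, (⇑αinf.symm)^[n] '' Set.range ι))
    (hmin : ∀ J : TwoSidedIdeal C, IsClosed (J : Set C) → (∀ c ∈ J, α c ∈ J) →
      J = ⊥ ∨ J = ⊤) :
    ∀ J : TwoSidedIdeal D, IsClosed (J : Set D) → (∀ x ∈ J, αinf x ∈ J) →
      J = ⊥ ∨ ((∃ c : C, c ≠ 0 ∧ ι c ∈ J) ∧ J = ⊤) := by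
  let _ : CStarAlgebra C := { ‹NormedRing C›, ‹StarRing C›, ‹CStarRing C›, ‹CompleteSpace C›,
    ‹NormedAlgebra ℂ C›, ‹StarModule ℂ C› with }
  let _ : CStarAlgebra D := { ‹NormedRing D›, ‹StarRing D›, ‹CStarRing D›, ‹CompleteSpace D›,
    ‹NormedAlgebra ℂ D›, ‹StarModule ℂ D› with }
  let _ : PartialOrder D := CStarAlgebra.spectralOrder D
  let _ : StarOrderedRing D := CStarAlgebra.spectralOrderedRing D
  intro J hJ hαJ
  refine or_iff_not_imp_left.mpr fun hJ0 => ?_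
  obtain ⟨c, hc, hcJ⟩ := J.exists_map_mem_ne_zero ι αinf hdense hJ hαJ hJ0
  have hcomap_closed : IsClosed (J.comap ι : Set C) :=
    J.coe_comap ι ▸ hJ.preimage (map_continuous ι)
  have hcomap_inv : ∀ c' ∈ J.comap ι, α c' ∈ J.comap ι := fun c' hc' => by
    rw [TwoSidedIdeal.mem_comap ι] at hc' ⊢
    rw [← hext]
    exact hαJ _ hc'
  have hcomap : J.comap ι = ⊤ := (hmin _ hcomap_closed hcomap_inv).resolve_left fun hbot => by
    have : c ∈ J.comap ι := (TwoSidedIdeal.mem_comap ι).mpr hcJ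
    rw [hbot, TwoSidedIdeal.mem_bot] at this
    exact hc (by rw [this, map_zero])
  refine ⟨⟨c, fun h => hc (by rw [h, map_zero]), hcJ⟩, J.one_mem_iff.mp ?_⟩
  have h1 : (1 : C) ∈ J.comap ι := hcomap ▸ TwoSidedIdeal.mem_top C
  simpa using (TwoSidedIdeal.mem_comap ι).mp h1

/-- Let `α` be an injective unital *-endomorphism of the unital C*-algebra `C`, and let
`C_∞ ⊇ C` be the direct limit of `(C, α)` (with `C` embedded via the injective
*-homomorphism `ι`, `C_∞ = closure (⋃ₙ α_∞⁻ⁿ(C))`, and `α_∞` the induced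
*-automorphism extending `α`).  If `(C, α)` is minimal, then every nonzero
`α_∞`-invariant closed two-sided ideal `J` of `C_∞` meets `C` nontrivially and equals
`C_∞`; in particular `(C_∞, α_∞)` is minimal. -/
theorem minimal_direct_limit
    {C : Type*} [NormedRing C] [StarRing C] [CStarRing C] [CompleteSpace C]
    [NormedAlgebra ℂ C] [StarModule ℂ C]
    {D : Type*} [NormedRing D] [StarRing D] [CStarRing D] [CompleteSpace D]
    [NormedAlgebra ℂ D] [StarModule ℂ D]
    (α : C →⋆ₐ[ℂ] C) (hα : Function.Injective α)
    (ι : C →⋆ₐ[ℂ] D) (hι : Function.Injective ι)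
    (αinf : D ≃⋆ₐ[ℂ] D)
    (hext : ∀ c : C, αinf (ι c) = ι (α c))
    (hdense : Dense (⋃ n : ℕ, (⇑αinf.symm)^[n] '' Set.range ι))
    (hmin : ∀ J : TwoSidedIdeal C, IsClosed (J : Set C) → (∀ c ∈ J, α c ∈ J) →
      J = ⊥ ∨ J = ⊤) :
    ∀ J : TwoSidedIdeal D, IsClosed (J : Set D) → (∀ x ∈ J, αinf x ∈ J) →
      J = ⊥ ∨ ((∃ c : C, c ≠ 0 ∧ ι c ∈ J) ∧ J = ⊤) :=
  minimal_direct_limit_general α ι αinf hext hdense hmin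
end
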